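/- arXiv:1707.09239 — 5 statements merged into one kernel-verified Lean document; each statement's English description precedes it below -/
import Mathlib

section
/- Let char(K) = p > 0 and let λ₁,…,λ_l be K-regular elements of degrees d₁,…,d_l over K such that (d₁⋯d_l)/lcm(d₁,…,d_l) < p. Then every element of K(λ₁,…,λ_l) is K-regular, i.e. the degree [K(λ₁,…,λ_l):K] is not divisible by p. -/
open IntermediateField Module

private lemma aux_finrank_iSup_le {K E : Type*} [Field K] [Field E] [Algebra K E]
    {ι : Type*} (f : ι → E) (s : Finset ι) :
    finrank K (⨆ i ∈ s, adjoin K {f i} : IntermediateField K E) ≤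
      ∏ i ∈ s, finrank K (adjoin K {f i} : IntermediateField K E) := by
  classical
  induction s using Finset.induction_on with
  | empty =>
    rw [show (⨆ i ∈ (∅ : Finset ι), adjoin K {f i} : IntermediateField K E) = ⊥ by simp]
    simp [IntermediateField.finrank_bot]
  | @insert a s ha ih =>
    rw [Finset.iSup_insert, Finset.prod_insert ha]
    exact le_trans (IntermediateField.finrank_sup_le _ _)
      (Nat.mul_le_mul_left _ ih)

theorem stmt_2 (K : Type*) [Field K] (p : ℕ) [Fact p.Prime] [CharP K p]
    (l : ℕ) (lam : Fin l → AlgebraicClosure K) (d : Fin l → ℕ)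
    (hd : ∀ i, d i = (minpoly K (lam i)).natDegree)
    (hreg : ∀ i, ¬ p ∣ d i)
    (hlt : (∏ i, d i) / (Finset.univ.lcm d) < p) :
    (∀ y ∈ IntermediateField.adjoin K (Set.range lam),
        ¬ p ∣ (minpoly K y).natDegree) ∧
    ¬ p ∣ Module.finrank K (IntermediateField.adjoin K (Set.range lam)) := by
  have hp : p.Prime := Fact.out
  have hint : ∀ x : AlgebraicClosure K, IsIntegral K x := fun x =>
    Algebra.IsIntegral.isIntegral x
  set L : IntermediateField K (AlgebraicClosure K) :=
    IntermediateField.adjoin K (Set.range lam) with hLdef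
  have hLsup : L = ⨆ i, adjoin K {lam i} := by
    rw [hLdef, ← IntermediateField.biSup_adjoin_simple, iSup_range]
  have hfini : ∀ i, FiniteDimensional K (adjoin K {lam i} :
      IntermediateField K (AlgebraicClosure K)) := fun i =>
    IntermediateField.adjoin.finiteDimensional (hint (lam i))
  have hfd : FiniteDimensional K L := by
    rw [hLsup]; exact IntermediateField.finiteDimensional_iSup_of_finite
  have hdeg : ∀ i, finrank K (adjoin K {lam i} :
      IntermediateField K (AlgebraicClosure K)) = d i := fun i => by
    rw [hd i]; exact IntermediateField.adjoin.finrank (hint (lam i))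
  set N := finrank K L with hN
  have hNpos : 0 < N := finrank_pos
  -- each d i divides N
  have hdvd : ∀ i, d i ∣ N := by
    intro i
    have hle : adjoin K {lam i} ≤ L := by
      rw [hLsup]; exact le_iSup (fun i => (adjoin K {lam i} :
        IntermediateField K (AlgebraicClosure K))) i
    have := IntermediateField.finrank_bot_mul_relfinrank hle
    rw [hdeg i] at this
    exact ⟨_, this.symm⟩
  have hlcm_dvd : Finset.univ.lcm d ∣ N := Finset.lcm_dvd fun i _ => hdvd i
  have hlcm_prod : Finset.univ.lcm d ∣ ∏ i, d i :=
    Finset.lcm_dvd fun i hi => Finset.dvd_prod_of_mem d hi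
  -- N ≤ ∏ d i
  have hNle : N ≤ ∏ i, d i := by
    have h1 := aux_finrank_iSup_le (K := K) lam (Finset.univ : Finset (Fin l))
    have h2 : (⨆ i ∈ Finset.univ, adjoin K {lam i} :
        IntermediateField K (AlgebraicClosure K)) = L := by
      rw [hLsup]; simp
    rw [h2] at h1
    calc N ≤ ∏ i, finrank K (adjoin K {lam i} :
          IntermediateField K (AlgebraicClosure K)) := h1
      _ = ∏ i, d i := Finset.prod_congr rfl fun i _ => hdeg i
  -- p does not divide lcm
  have hplcm : ¬ p ∣ Finset.univ.lcm d := by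
    intro h
    obtain ⟨i, _, hi⟩ := (hp.prime.dvd_finset_prod_iff d).mp (h.trans hlcm_prod)
    exact hreg i hi
  -- p does not divide N
  have hmain : ¬ p ∣ N := by
    intro hpN
    have hlcmpos : 0 < Finset.univ.lcm d := Nat.pos_of_dvd_of_pos hlcm_dvd hNpos
    set t := N / Finset.univ.lcm d with ht
    have hNt : N = Finset.univ.lcm d * t := (Nat.mul_div_cancel' hlcm_dvd).symm
    have htpos : 0 < t := by
      rcases Nat.eq_zero_or_pos t with h0 | h0
      · rw [h0, Nat.mul_zero] at hNt; omega
      · exact h0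
    have htlt : t < p := lt_of_le_of_lt (Nat.div_le_div_right hNle) hlt
    rw [hNt] at hpN
    rcases hp.dvd_mul.mp hpN with h | h
    · exact hplcm h
    · exact absurd (Nat.le_of_dvd htpos h) (not_le.mpr htlt)
  refine ⟨fun y hy hpy => hmain ?_, hmain⟩
  have hle : adjoin K {y} ≤ L := by
    rw [IntermediateField.adjoin_simple_le_iff]; exact hy
  have h1 := IntermediateField.finrank_bot_mul_relfinrank hle
  have h2 : finrank K (adjoin K {y} :
      IntermediateField K (AlgebraicClosure K)) = (minpoly K y).natDegree :=
    IntermediateField.adjoin.finrank (hint y)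
  exact hpy.trans (h2 ▸ ⟨_, h1.symm⟩)
end

section
/- If M is an intermediate field K ⊆ M ⊆ K̄ all of whose elements are K-regular, then the restriction of the K-projection H_K to M is a K-linear map M → K. -/
/-- K-regular: degree over K not divisible by the characteristic. -/
def KReg (K : Type*) [Field K] (x : AlgebraicClosure K) : Prop :=
  ¬ (ringChar K ∣ (minpoly K x).natDegree)

/-- The K-projection `H_K(λ) = -a_{d-1}/d`. -/
noncomputable def HK (K : Type*) [Field K] (x : AlgebraicClosure K) : K :=
  -(minpoly K x).coeff ((minpoly K x).natDegree - 1) / ((minpoly K x).natDegree : K)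

open Polynomial IntermediateField Module

lemma KReg.cast_ne_zero {K : Type*} [Field K] {x : AlgebraicClosure K} (h : KReg K x) :
    ((minpoly K x).natDegree : K) ≠ 0 := by
  intro h0
  exact h ((CharP.cast_eq_zero_iff K (ringChar K) _).mp h0)

lemma KReg.separable {K : Type*} [Field K] {x : AlgebraicClosure K} (h : KReg K x) :
    IsSeparable K x := by
  have hx : IsIntegral K x := Algebra.IsIntegral.isIntegral x
  have hirr := minpoly.irreducible hx
  rw [IsSeparable, separable_iff_derivative_ne_zero hirr]
  intro hd
  have hdeg := minpoly.natDegree_pos hx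
  have h1 := congrArg (fun p => Polynomial.coeff p ((minpoly K x).natDegree - 1)) hd
  simp only [coeff_derivative, coeff_zero] at h1
  rw [Nat.sub_add_cancel hdeg, Polynomial.coeff_natDegree,
    (minpoly.monic hx).leadingCoeff, one_mul] at h1
  apply h.cast_ne_zero
  rw [← Nat.sub_add_cancel hdeg]
  exact_mod_cast h1

lemma trace_div_finrank {K L : Type*} [Field K] [Field L] [Algebra K L]
    [FiniteDimensional K L] (hn : ((finrank K L : K) ≠ 0)) (z : L) :
    -(minpoly K z).coeff ((minpoly K z).natDegree - 1) / ((minpoly K z).natDegree : K)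
      = Algebra.trace K L z / (finrank K L : K) := by
  have hz : IsIntegral K z := IsIntegral.of_finite K z
  have hdeg : 0 < (minpoly K z).natDegree := minpoly.natDegree_pos hz
  have htr : Algebra.trace K L z =
      finrank K⟮z⟯ L • Algebra.trace K K⟮z⟯ (AdjoinSimple.gen K z) :=
    trace_eq_trace_adjoin K z
  have hgen : Algebra.trace K K⟮z⟯ (AdjoinSimple.gen K z) = -(minpoly K z).nextCoeff := by
    rw [← IntermediateField.adjoin.powerBasis_gen hz,
      (IntermediateField.adjoin.powerBasis hz).trace_gen_eq_nextCoeff_minpoly,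
      IntermediateField.adjoin.powerBasis_gen hz,
      ← minpoly.algebraMap_eq (algebraMap K⟮z⟯ L).injective,
      IntermediateField.AdjoinSimple.algebraMap_gen]
  have hrank : finrank K K⟮z⟯ * finrank K⟮z⟯ L = finrank K L :=
    finrank_mul_finrank K K⟮z⟯ L
  have hadj : finrank K K⟮z⟯ = (minpoly K z).natDegree := IntermediateField.adjoin.finrank hz
  have hd0 : ((minpoly K z).natDegree : K) ≠ 0 := fun h0 => hn (by
    rw [← hrank, hadj]; push_cast; rw [h0, zero_mul])
  have hm0 : ((finrank K⟮z⟯ L : K)) ≠ 0 := fun h0 => hn (by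
    rw [← hrank]; push_cast; rw [h0, mul_zero])
  rw [htr, hgen, ← hrank, hadj, ← nextCoeff_of_natDegree_pos hdeg]
  push_cast
  field_simp
  ring

lemma HK_eq_trace {K : Type*} [Field K] (F : IntermediateField K (AlgebraicClosure K))
    [FiniteDimensional K F] (hn : ((finrank K F : K) ≠ 0)) (z : F) :
    HK K (z : AlgebraicClosure K) = Algebra.trace K F z / (finrank K F : K) := by
  have hmp : minpoly K (z : AlgebraicClosure K) = minpoly K z := by
    rw [← minpoly.algebraMap_eq (algebraMap F (AlgebraicClosure K)).injective z]; rfl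
  unfold HK
  rw [hmp]
  exact trace_div_finrank hn z

theorem stmt_6 (K : Type*) [Field K] (M : IntermediateField K (AlgebraicClosure K))
    (hM : ∀ x ∈ M, KReg K x) :
    ∀ (a b : K), ∀ x ∈ M, ∀ y ∈ M,
      HK K (a • x + b • y) = a * HK K x + b * HK K y := by
  intro a b x hx y hy
  set F := IntermediateField.adjoin K {x, y} with hF
  have hsub : ({x, y} : Set (AlgebraicClosure K)) ⊆ M := by
    rintro z (rfl | rfl)
    · exact hx
    · exact hy
  have hfin : ({x, y} : Set (AlgebraicClosure K)).Finite := (Set.finite_singleton y).insert x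
  haveI := hfin.to_subtype
  haveI hfd : FiniteDimensional K F :=
    IntermediateField.finiteDimensional_adjoin (fun z _ => Algebra.IsIntegral.isIntegral z)
  haveI hsep : Algebra.IsSeparable K F :=
    (IntermediateField.isSeparable_adjoin_iff_isSeparable K _).2
      (fun z hz => (hM z (hsub hz)).separable)
  obtain ⟨α, hα⟩ := Field.exists_primitive_element K F
  have hαM : (α : AlgebraicClosure K) ∈ M := by
    apply IntermediateField.adjoin_le_iff.mpr hsub
    exact α.2
  have hαint : IsIntegral K α := IsIntegral.of_finite K α
  have hmpα : minpoly K (α : AlgebraicClosure K) = minpoly K α := by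
    rw [← minpoly.algebraMap_eq (algebraMap F (AlgebraicClosure K)).injective α]; rfl
  have hfr : finrank K F = (minpoly K (α : AlgebraicClosure K)).natDegree := by
    rw [hmpα, ← IntermediateField.adjoin.finrank hαint, hα]
    exact IntermediateField.finrank_top'.symm
  have hn : ((finrank K F : K) ≠ 0) := by
    rw [hfr]
    exact (hM _ hαM).cast_ne_zero
  have hxF : x ∈ F := IntermediateField.subset_adjoin K _ (by left; rfl)
  have hyF : y ∈ F := IntermediateField.subset_adjoin K _ (by right; rfl)
  set x' : F := ⟨x, hxF⟩
  set y' : F := ⟨y, hyF⟩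
  have hw : a • x + b • y = ((a • x' + b • y' : F) : AlgebraicClosure K) := by
    push_cast
    rfl
  rw [hw, HK_eq_trace F hn, HK_eq_trace F hn x', HK_eq_trace F hn y', map_add,
    LinearMap.map_smul, LinearMap.map_smul, smul_eq_mul, smul_eq_mul]
  ring
end

section
/- Two K-regular elements λ₁ = α₁ + β₁ and λ₂ = α₂ + β₂ (with αᵢ = H_K(λᵢ) ∈ K and βᵢ ∈ Ker(H_K)) are conjugate over K if and only if α₁ = α₂ and β₁, β₂ are conjugate over K. -/
theorem stmt_7 (K : Type*) [Field K]
    (lam₁ lam₂ beta₁ beta₂ : AlgebraicClosure K) (alpha₁ alpha₂ : K)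
    (h₁ : KReg K lam₁) (h₂ : KReg K lam₂)
    (ha₁ : alpha₁ = HK K lam₁) (ha₂ : alpha₂ = HK K lam₂)
    (hd₁ : lam₁ = algebraMap K (AlgebraicClosure K) alpha₁ + beta₁)
    (hd₂ : lam₂ = algebraMap K (AlgebraicClosure K) alpha₂ + beta₂)
    (hb₁ : KReg K beta₁ ∧ HK K beta₁ = 0)
    (hb₂ : KReg K beta₂ ∧ HK K beta₂ = 0) :
    minpoly K lam₁ = minpoly K lam₂ ↔
      (alpha₁ = alpha₂ ∧ minpoly K beta₁ = minpoly K beta₂) := by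
  have e₁ : beta₁ = lam₁ - algebraMap K (AlgebraicClosure K) alpha₁ := by
    rw [hd₁]; ring
  have e₂ : beta₂ = lam₂ - algebraMap K (AlgebraicClosure K) alpha₂ := by
    rw [hd₂]; ring
  constructor
  · intro h
    have hα : alpha₁ = alpha₂ := by rw [ha₁, ha₂]; unfold HK; rw [h]
    refine ⟨hα, ?_⟩
    rw [e₁, e₂, minpoly.sub_algebraMap, minpoly.sub_algebraMap, h, hα]
  · rintro ⟨hα, hβ⟩
    have := congrArg (fun p => Polynomial.comp p (Polynomial.X - Polynomial.C alpha₁)) hβ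
    rw [hd₁, hd₂, add_comm, add_comm (algebraMap K (AlgebraicClosure K) alpha₂),
      minpoly.add_algebraMap, minpoly.add_algebraMap, hβ, hα]
end

section
/- A field K is real closed if and only if K is not algebraically closed, char(K) ≠ 2, and every irreducible polynomial in K[X] has degree at most 2. -/
/-!
If every irreducible polynomial over `K` has degree at most `2`, every element of the algebraic
closure satisfies a monic quadratic over `K`. For a fourth root `b` of `a ∈ K` with
`b ^ 2 + p b + q = 0`, reducing `b ^ 4` gives `a = (2pq - p ^ 3) b + q ^ 2 - p ^ 2 q`, so either
`b ∈ K` or `a = q ^ 2 - p ^ 2 q` with `p (2q - p ^ 2) = 0`; either way `a` or `-a` is a square.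
Completing the square (here `2 ≠ 0` is needed) then puts every element of the algebraic closure
in `K(√-1)`; if `√-1` were in `K`, `K` would be algebraically closed. Conversely, `K(√-1)` has
degree at most `2`, which bounds the degree of every irreducible polynomial, and in
characteristic `2` the element `1` is a square root of `-1`.
-/

open Polynomial IntermediateField Module

/-- A field `K` is real closed iff `√-1 ∉ K` and `K(√-1)` is algebraically closed
(within a fixed algebraic closure, `K(√-1)` being the whole algebraic closure). -/
def RealClosed (K : Type*) [Field K] : Prop :=
  (¬ ∃ x : K, x ^ 2 = -1) ∧
  ∀ i : AlgebraicClosure K, i ^ 2 = -1 → IntermediateField.adjoin K {i} = ⊤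

section

variable {K L : Type*} [Field K] [Field L] [Algebra K L]

theorem Polynomial.Monic.aeval_eq_of_natDegree_eq_two {p : K[X]} (hp : p.Monic)
    (h : p.natDegree = 2) (x : L) :
    aeval x p = x ^ 2 + algebraMap K L (p.coeff 1) * x + algebraMap K L (p.coeff 0) := by
  have hc2 : p.coeff 2 = 1 := h ▸ hp.coeff_natDegree
  rw [aeval_eq_sum_range, h]
  simp only [Finset.sum_range_succ, Finset.range_one, Finset.sum_singleton, Algebra.smul_def,
    pow_zero, pow_one, mul_one, hc2, map_one, one_mul]
  ring

theorem exists_sq_add_mul_add_eq_zero [Algebra.IsIntegral K L]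
    (hdeg : ∀ f : K[X], Irreducible f → f.natDegree ≤ 2) (y : L) :
    ∃ p q : K, y ^ 2 + algebraMap K L p * y + algebraMap K L q = 0 := by
  have hy : IsIntegral K y := Algebra.IsIntegral.isIntegral y
  have hd : (minpoly K y).natDegree ≤ 2 := hdeg _ (minpoly.irreducible hy)
  set f := minpoly K y * X ^ (2 - (minpoly K y).natDegree)
  have hmon : f.Monic := (minpoly.monic hy).mul (monic_X_pow _)
  have hnat : f.natDegree = 2 := by
    rw [(minpoly.monic hy).natDegree_mul (monic_X_pow _), natDegree_X_pow]
    omega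
  refine ⟨f.coeff 1, f.coeff 0, ?_⟩
  rw [← hmon.aeval_eq_of_natDegree_eq_two hnat, map_mul, minpoly.aeval, zero_mul]

theorem isSquare_or_isSquare_neg (hdeg : ∀ f : K[X], Irreducible f → f.natDegree ≤ 2) (a : K) :
    IsSquare a ∨ IsSquare (-a) := by
  let ι := algebraMap K (AlgebraicClosure K)
  obtain ⟨b, hb⟩ := IsAlgClosed.exists_pow_nat_eq (ι a) (n := 4) (by norm_num)
  obtain ⟨p, q, hpq⟩ := exists_sq_add_mul_add_eq_zero hdeg b
  have hlin : ι (2 * p * q - p ^ 3) * b = ι (a - q ^ 2 + p ^ 2 * q) := by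
    simp only [ι, map_sub, map_add, map_mul, map_pow, map_ofNat]
    linear_combination hb - (b ^ 2 - ι p * b + (ι p ^ 2 - ι q)) * hpq
  by_cases hz : 2 * p * q - p ^ 3 = 0
  · rw [hz, map_zero, zero_mul, eq_comm, map_eq_zero] at hlin
    rcases eq_or_ne p 0 with rfl | hp
    · exact Or.inl ⟨q, by linear_combination hlin⟩
    · have hq : p ^ 2 = 2 * q :=
        (mul_left_cancel₀ hp (by linear_combination -hz : p * p ^ 2 = p * (2 * q)))
      exact Or.inr ⟨q, by linear_combination -hlin + q * hq⟩
  · have hbK : b = ι ((a - q ^ 2 + p ^ 2 * q) / (2 * p * q - p ^ 3)) := by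
      rw [map_div₀, eq_div_iff ((_root_.map_ne_zero ι).mpr hz), ← hlin, mul_comm]
    refine Or.inl ⟨((a - q ^ 2 + p ^ 2 * q) / (2 * p * q - p ^ 3)) ^ 2, ι.injective ?_⟩
    rw [← hb, hbK]
    simp only [map_mul, map_pow]
    ring

theorem mem_adjoin_of_sq_eq_algebraMap (hsq : ∀ a : K, IsSquare a ∨ IsSquare (-a))
    {i : L} (hi : i ^ 2 = -1) {s : L} {d : K} (hs : s ^ 2 = algebraMap K L d) : s ∈ K⟮i⟯ := by
  have hiK : i ∈ K⟮i⟯ := mem_adjoin_simple_self K i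
  rcases hsq d with ⟨t, rfl⟩ | ⟨t, ht⟩
  · have : s ^ 2 = algebraMap K L t ^ 2 := by rw [hs, map_mul, sq]
    rcases sq_eq_sq_iff_eq_or_eq_neg.mp this with h | h <;> rw [h]
    exacts [K⟮i⟯.algebraMap_mem t, neg_mem (K⟮i⟯.algebraMap_mem t)]
  · have : s ^ 2 = (i * algebraMap K L t) ^ 2 := by
      rw [hs, mul_pow, hi, ← map_pow, sq, ← ht]
      simp
    rcases sq_eq_sq_iff_eq_or_eq_neg.mp this with h | h <;> rw [h]
    exacts [mul_mem hiK (K⟮i⟯.algebraMap_mem t), neg_mem (mul_mem hiK (K⟮i⟯.algebraMap_mem t))]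

theorem adjoin_eq_top_of_sq_eq_neg_one [Algebra.IsIntegral K L] (h2 : (2 : K) ≠ 0)
    (hdeg : ∀ f : K[X], Irreducible f → f.natDegree ≤ 2) {i : L} (hi : i ^ 2 = -1) :
    K⟮i⟯ = ⊤ := by
  refine eq_top_iff.mpr fun y _ => ?_
  obtain ⟨p, q, hpq⟩ := exists_sq_add_mul_add_eq_zero hdeg y
  have hs : (algebraMap K L 2 * y + algebraMap K L p) ^ 2 = algebraMap K L (p ^ 2 - 4 * q) := by
    simp only [map_sub, map_mul, map_pow, map_ofNat]
    linear_combination 4 * hpq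
  have hsK := mem_adjoin_of_sq_eq_algebraMap (isSquare_or_isSquare_neg hdeg) hi hs
  have hy : y = (algebraMap K L 2)⁻¹ *
      (algebraMap K L 2 * y + algebraMap K L p - algebraMap K L p) := by
    rw [add_sub_cancel_right, inv_mul_cancel_left₀ ((_root_.map_ne_zero _).mpr h2)]
  rw [hy]
  exact mul_mem (inv_mem (K⟮i⟯.algebraMap_mem 2)) (sub_mem hsK (K⟮i⟯.algebraMap_mem p))

theorem not_exists_sq_eq_neg_one_of_not_isAlgClosed (hna : ¬ IsAlgClosed K) (h2 : (2 : K) ≠ 0)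
    (hdeg : ∀ f : K[X], Irreducible f → f.natDegree ≤ 2) : ¬ ∃ x : K, x ^ 2 = -1 := by
  rintro ⟨j, hj⟩
  let ι := algebraMap K (AlgebraicClosure K)
  have htop : K⟮ι j⟯ = ⊤ :=
    adjoin_eq_top_of_sq_eq_neg_one h2 hdeg (by rw [← map_pow, hj, map_neg, map_one])
  have hbot : K⟮ι j⟯ = ⊥ :=
    adjoin_simple_eq_bot_iff.mpr ((⊥ : IntermediateField K _).algebraMap_mem j)
  have hsurj : Function.Surjective ι := fun y => mem_bot.mp (hbot ▸ htop ▸ mem_top)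
  exact hna (IsAlgClosed.of_ringEquiv _ _ (RingEquiv.ofBijective ι ⟨ι.injective, hsurj⟩).symm)

theorem natDegree_le_finrank_of_irreducible [IsAlgClosed L] [FiniteDimensional K L] {f : K[X]}
    (hf : Irreducible f) : f.natDegree ≤ finrank K L := by
  obtain ⟨r, hr⟩ := IsAlgClosed.exists_aeval_eq_zero L f (degree_pos_of_irreducible hf).ne'
  rw [← natDegree_mul_C (inv_ne_zero (leadingCoeff_ne_zero.mpr hf.ne_zero)),
    minpoly.eq_of_irreducible hf hr]
  exact minpoly.natDegree_le r

theorem finrank_eq_natDegree_of_adjoin_eq_top {i : L} (hi : IsIntegral K i) (h : K⟮i⟯ = ⊤) :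
    finrank K L = (minpoly K i).natDegree := by
  rw [← finrank_top', ← h, adjoin.finrank hi]

theorem natDegree_minpoly_le_two_of_sq_eq_neg_one {i : L} (hi : i ^ 2 = -1) :
    (minpoly K i).natDegree ≤ 2 := by
  have hX : (X ^ 2 + C 1 : K[X]).Monic := monic_X_pow_add_C 1 two_ne_zero
  have h := natDegree_le_natDegree (minpoly.degree_le_of_ne_zero K i hX.ne_zero (by simp [hi]))
  rwa [natDegree_X_pow_add_C] at h

end

theorem stmt_17 (K : Type*) [Field K] :
    RealClosed K ↔
      (¬ IsAlgClosed K ∧ ringChar K ≠ 2 ∧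
        ∀ f : Polynomial K, Irreducible f → f.natDegree ≤ 2) := by
  constructor
  · rintro ⟨hns, htop⟩
    obtain ⟨i, hi⟩ := IsAlgClosed.exists_pow_nat_eq (k := AlgebraicClosure K) (-1) two_pos
    have hint : IsIntegral K i := Algebra.IsIntegral.isIntegral i
    have hrank := finrank_eq_natDegree_of_adjoin_eq_top hint (htop i hi)
    have : FiniteDimensional K (AlgebraicClosure K) :=
      Module.finite_of_finrank_pos (hrank ▸ minpoly.natDegree_pos hint)
    refine ⟨fun _ => hns (IsAlgClosed.exists_pow_nat_eq (-1) two_pos),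
      fun hch => hns ⟨1, by rw [one_pow, neg_one_eq_one_iff.mpr hch]⟩,
      fun f hf => ?_⟩
    exact (natDegree_le_finrank_of_irreducible hf).trans
      (hrank ▸ natDegree_minpoly_le_two_of_sq_eq_neg_one hi)
  · rintro ⟨hna, hch, hdeg⟩
    have h2 := Ring.two_ne_zero hch
    exact ⟨not_exists_sq_eq_neg_one_of_not_isAlgClosed hna h2 hdeg,
      fun i hi => adjoin_eq_top_of_sq_eq_neg_one h2 hdeg hi⟩
end

section
/- A field K is real closed if and only if K is perfect, char(K) ≠ 2, and the group of K-automorphisms of its algebraic closure K̄ has order exactly 2. -/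
/-!
Both sides are equivalent to `char K ≠ 2 ∧ [K̄ : K] = 2`.

If `K̄ = K(i)` with `i² = -1 ∉ K`, then `[K̄ : K] = 2`. Conversely, an extension of degree `2`
in characteristic `≠ 2` is separable (the derivative of a minimal polynomial of degree `1` or `2`
does not vanish), hence Galois, with an automorphism `σ` of order `2`. If `K` contained a square
root `i` of `-1`, pick `β ≠ 0` with `σ β = -β` and `γ² = β`; then `(σ γ)² = (i γ)²`, so
`σ γ = ± i γ` and `γ = σ² γ = i² γ = -γ`, which is absurd. Hence `i ∉ K` and `K(i) = K̄` by degree.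

For the Galois-theoretic side, separability of `K̄/K` is perfectness of `K`, and for a Galois
extension the degree is the order of the automorphism group.
-/

open Polynomial Module IntermediateField

theorem Irreducible.separable_of_natDegree_ne_zero {F : Type*} [Field F] {f : F[X]}
    (hf : Irreducible f) (hd : (f.natDegree : F) ≠ 0) : f.Separable := by
  refine (separable_iff_derivative_ne_zero hf).mpr fun h => ?_
  have hd₀ : f.natDegree ≠ 0 := fun h0 => hd (by rw [h0, Nat.cast_zero])
  obtain ⟨n, hn⟩ := Nat.exists_eq_add_one_of_ne_zero hd₀
  have hcoeff := coeff_derivative f n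
  rw [h, coeff_zero, ← Nat.cast_add_one, ← hn, ← leadingCoeff, eq_comm, mul_eq_zero,
    leadingCoeff_eq_zero] at hcoeff
  exact hcoeff.elim hf.ne_zero hd

theorem Algebra.isSeparable_of_finrank_ne_zero {K L : Type*} [Field K] [Field L] [Algebra K L]
    [FiniteDimensional K L] (h : (finrank K L : K) ≠ 0) : Algebra.IsSeparable K L := by
  refine ⟨fun x => ?_⟩
  have hx : IsIntegral K x := .of_finite K x
  obtain ⟨m, hm⟩ := minpoly.degree_dvd hx
  refine (minpoly.irreducible hx).separable_of_natDegree_ne_zero fun hd => h ?_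
  rw [hm, Nat.cast_mul, hd, zero_mul]

theorem finrank_adjoin_sqrt_eq_two {K L : Type*} [Field K] [Field L] [Algebra K L] {a : K}
    (ha : ∀ b : K, b ^ 2 ≠ a) {x : L} (hx : x ^ 2 = algebraMap K L a) :
    finrank K K⟮x⟯ = 2 := by
  have hroot : aeval x (X ^ 2 - C a) = 0 := by simp [hx]
  have hmonic := monic_X_pow_sub_C a two_ne_zero
  have hmin : minpoly K x = X ^ 2 - C a :=
    (minpoly.eq_of_irreducible_of_monic (X_pow_sub_C_irreducible_of_prime Nat.prime_two ha)
      hroot hmonic).symm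
  rw [adjoin.finrank ⟨_, hmonic, hroot⟩, hmin, natDegree_X_pow_sub_C]

theorem ringChar_ne_two_of_forall_sq_ne_neg_one {K : Type*} [Field K]
    (hK : ∀ x : K, x ^ 2 ≠ -1) : ringChar K ≠ 2 :=
  fun h => hK 1 (by rw [one_pow, neg_one_eq_one_iff.mpr h])

theorem sq_ne_neg_one_of_involution {K L : Type*} [Field K] [Field L] [Algebra K L]
    [IsAlgClosed L] (h2 : (2 : K) ≠ 0) {σ : L ≃ₐ[K] L} (hσ : σ ≠ 1) (hσ2 : σ ^ 2 = 1)
    (x : K) : x ^ 2 ≠ -1 := by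
  intro hx
  set i := algebraMap K L x
  have hi : i ^ 2 = -1 := by rw [← map_pow, hx, map_neg, map_one]
  have hσσ (z : L) : σ (σ z) = z := by rw [← AlgEquiv.mul_apply, ← sq, hσ2, AlgEquiv.one_apply]
  obtain ⟨z, hz⟩ : ∃ z, σ z ≠ z := by
    by_contra! h
    exact hσ (AlgEquiv.ext h)
  set β := z - σ z
  have hβ : β ≠ 0 := sub_ne_zero.mpr (Ne.symm hz)
  have hσβ : σ β = -β := by simp [β, hσσ]
  obtain ⟨γ, hγ⟩ := IsAlgClosed.exists_pow_nat_eq β two_pos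
  have hσγ : σ γ = i * γ ∨ σ γ = -(i * γ) := by
    refine sq_eq_sq_iff_eq_or_eq_neg.mp ?_
    rw [← map_pow, hγ, hσβ, mul_pow, hi, ← hγ]
    ring
  have hσi : σ i = i := σ.commutes x
  have hγγ : σ (σ γ) = -γ := by
    rcases hσγ with h | h <;> simp only [h, map_mul, map_neg, hσi] <;> linear_combination γ * hi
  rw [hσσ] at hγγ
  have h2L : (2 : L) ≠ 0 := by
    simpa only [map_ofNat, map_zero] using (algebraMap K L).injective.ne h2
  apply hβ
  rw [← hγ, sq_eq_zero_iff]
  exact (mul_eq_zero.mp (by linear_combination hγγ : (2 : L) * γ = 0)).resolve_left h2L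

theorem isGalois_of_finrank_eq_two {K L : Type*} [Field K] [Field L] [Algebra K L]
    (h2 : (2 : K) ≠ 0) (hrank : finrank K L = 2) : IsGalois K L := by
  have : FiniteDimensional K L := Module.finite_of_finrank_eq_succ hrank
  have : Algebra.IsQuadraticExtension K L := ⟨hrank⟩
  have : Algebra.IsSeparable K L :=
    Algebra.isSeparable_of_finrank_ne_zero (by rwa [hrank, Nat.cast_ofNat])
  infer_instance

theorem realClosed_iff_finrank_eq_two (K : Type*) [Field K] :
    RealClosed K ↔ ringChar K ≠ 2 ∧ finrank K (AlgebraicClosure K) = 2 := by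
  constructor
  · rintro ⟨hK, hadj⟩
    obtain ⟨i, hi⟩ := IsAlgClosed.exists_pow_nat_eq (-1 : AlgebraicClosure K) two_pos
    refine ⟨ringChar_ne_two_of_forall_sq_ne_neg_one (not_exists.mp hK), ?_⟩
    rw [← finrank_top', ← hadj i hi]
    exact finrank_adjoin_sqrt_eq_two (not_exists.mp hK) (by rw [hi, map_neg, map_one])
  · rintro ⟨hchar, hrank⟩
    have : FiniteDimensional K (AlgebraicClosure K) := Module.finite_of_finrank_eq_succ hrank
    have := isGalois_of_finrank_eq_two (Ring.two_ne_zero hchar) hrank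
    have hcard : Nat.card Gal(AlgebraicClosure K/K) = 2 := by
      rw [IsGalois.card_aut_eq_finrank, hrank]
    have : Nontrivial Gal(AlgebraicClosure K/K) :=
      Finite.one_lt_card_iff_nontrivial.mp (by rw [hcard]; norm_num)
    obtain ⟨σ, hσ⟩ := exists_ne (1 : Gal(AlgebraicClosure K/K))
    have hK : ∀ x : K, x ^ 2 ≠ -1 :=
      sq_ne_neg_one_of_involution (Ring.two_ne_zero hchar) hσ (hcard ▸ pow_card_eq_one')
    refine ⟨not_exists.mpr hK, fun i hi => eq_of_le_of_finrank_eq le_top ?_⟩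
    rw [finrank_top', hrank]
    exact finrank_adjoin_sqrt_eq_two hK (by rw [hi, map_neg, map_one])

theorem stmt_18 (K : Type*) [Field K] :
    RealClosed K ↔
      (PerfectField K ∧ ringChar K ≠ 2 ∧
        Nat.card (AlgebraicClosure K ≃ₐ[K] AlgebraicClosure K) = 2) := by
  rw [realClosed_iff_finrank_eq_two]
  constructor
  · rintro ⟨hchar, hrank⟩
    have : FiniteDimensional K (AlgebraicClosure K) := Module.finite_of_finrank_eq_succ hrank
    have := isGalois_of_finrank_eq_two (Ring.two_ne_zero hchar) hrank
    refine ⟨?_, hchar, by rw [IsGalois.card_aut_eq_finrank, hrank]⟩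
    exact (perfectField_iff_isSeparable_algebraicClosure K (AlgebraicClosure K)).mpr inferInstance
  · rintro ⟨hperf, hchar, hcard⟩
    have : Finite Gal(AlgebraicClosure K/K) := Nat.finite_of_card_ne_zero (by omega)
    have := IsGalois.finiteDimensional_of_finite K (AlgebraicClosure K)
    exact ⟨hchar, by rw [← IsGalois.card_aut_eq_finrank, hcard]⟩
end
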